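/- For every unit complex number u = e^{iα} with |α| < 2π/3, the Hermitian matrix J_u has signature (3,1), i.e. three positive eigenvalues and one negative eigenvalue; and for α ∈ ±(2π/3, π) it has signature (2,2). -/
import Mathlib

open Complex Real

/-- The Hermitian matrix `J_u` (here `ū = conj u`). -/
noncomputable def Jmat (u : ℂ) : Matrix (Fin 4) (Fin 4) ℂ :=
  let c : ℂ := (starRingEnd ℂ) u
  !![1 + (u + c)/2, -1 - (u + c)/2, 1 + u, -3 - 2*(u + c) - c^2;
     -1 - (u + c)/2, 1 + (u + c)/2, -1 - u, 1 + u;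
     1 + c, -1 - c, 4 + 2*(u + c), -4 - 2*(u + c);
     -3 - 2*(u + c) - u^2, 1 + c, -4 - 2*(u + c), 4 + 2*(u + c)]

open Matrix in
theorem det_fin_four' {R : Type*} [CommRing R] (M : Matrix (Fin 4) (Fin 4) R) :
    M.det =
      M 0 0 * (M 1 1 * (M 2 2 * M 3 3 - M 2 3 * M 3 2) - M 1 2 * (M 2 1 * M 3 3 - M 2 3 * M 3 1)
        + M 1 3 * (M 2 1 * M 3 2 - M 2 2 * M 3 1))
      - M 0 1 * (M 1 0 * (M 2 2 * M 3 3 - M 2 3 * M 3 2) - M 1 2 * (M 2 0 * M 3 3 - M 2 3 * M 3 0)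
        + M 1 3 * (M 2 0 * M 3 2 - M 2 2 * M 3 0))
      + M 0 2 * (M 1 0 * (M 2 1 * M 3 3 - M 2 3 * M 3 1) - M 1 1 * (M 2 0 * M 3 3 - M 2 3 * M 3 0)
        + M 1 3 * (M 2 0 * M 3 1 - M 2 1 * M 3 0))
      - M 0 3 * (M 1 0 * (M 2 1 * M 3 2 - M 2 2 * M 3 1) - M 1 1 * (M 2 0 * M 3 2 - M 2 2 * M 3 0)
        + M 1 2 * (M 2 0 * M 3 1 - M 2 1 * M 3 0)) := by
  simp [Matrix.det_succ_row_zero, Fin.sum_univ_succ, Matrix.submatrix_apply, Fin.succ_zero_eq_one,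
    show Fin.succ (2:Fin 3) = 3 by decide, show (2:Fin 4).succAbove 2 = 3 by decide,
    show (1:Fin 4).succAbove 2 = 3 by decide, show Fin.castSucc (2:Fin 3) = 2 by decide,
    show (3:Fin 4).succAbove 2 = 2 by decide]
  ring

open Matrix in
lemma det_smul_one_sub {A : Matrix (Fin 4) (Fin 4) ℂ} (hA : A.IsHermitian) (x : ℂ) :
    det (x • (1 : Matrix (Fin 4) (Fin 4) ℂ) - A) = ∏ i, (x - (hA.eigenvalues i : ℂ)) := by
  set U : Matrix (Fin 4) (Fin 4) ℂ := (hA.eigenvectorUnitary : Matrix (Fin 4) (Fin 4) ℂ)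
  have hUs : U * star U = 1 := Unitary.coe_mul_star_self _
  have key : x • (1 : Matrix (Fin 4) (Fin 4) ℂ) - A
      = U * (x • 1 - diagonal (RCLike.ofReal ∘ hA.eigenvalues)) * star U := by
    conv_lhs => rw [hA.spectral_theorem]
    rw [Matrix.mul_sub, Matrix.sub_mul]
    congr 1
    rw [Matrix.mul_smul, Matrix.mul_one, Matrix.smul_mul, hUs]
  rw [key, det_mul_right_comm, hUs, Matrix.one_mul]
  have : x • (1 : Matrix (Fin 4) (Fin 4) ℂ) - diagonal (RCLike.ofReal ∘ hA.eigenvalues)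
      = diagonal (fun i => x - (hA.eigenvalues i : ℂ)) := by
    rw [smul_one_eq_diagonal, diagonal_sub]
    rfl
  rw [this, det_diagonal]

open Matrix in
set_option maxHeartbeats 4000000 in
lemma charJ (u x : ℂ) (hu : u ≠ 0) (hc : (starRingEnd ℂ) u = u⁻¹) :
    det (x • (1 : Matrix (Fin 4) (Fin 4) ℂ) - Jmat u) =
      x^4 - (5*(u+u⁻¹)+10)*x^3 + (-2*(u+u⁻¹)^3-3*(u+u⁻¹)^2+5*(u+u⁻¹)+6)*x^2
      - (-(5/2)*((u+u⁻¹)+1)^2*((u+u⁻¹)+2)^2)*x + (-((u+u⁻¹)+1)^3*((u+u⁻¹)+2)^2) := by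
  rw [det_fin_four']
  simp (config := { decide := true }) only [Jmat, hc, Matrix.sub_apply, Matrix.smul_apply,
    Matrix.one_apply, Matrix.cons_val',
    Matrix.cons_val_zero, Matrix.cons_val_one, Matrix.head_cons, Matrix.empty_val',
    Matrix.cons_val_fin_one, Matrix.head_fin_const, Matrix.of_apply,
    Matrix.cons_val_two, Matrix.cons_val_three, Matrix.tail_cons, if_true, if_false, ite_true,
    ite_false, smul_eq_mul, mul_one, mul_zero, smul_zero]
  have hq : u * u⁻¹ = 1 := mul_inv_cancel₀ hu
  linear_combination ((8) + (-10) * x + (2) * x ^ 2 + (14) * u⁻¹ + (-10) * u⁻¹ * x + (4) * u⁻¹ * x ^ 2 + (9) * u⁻¹ ^ 2 + (-5/2) * u⁻¹ ^ 2 * x + (2) * u⁻¹ ^ 3 + (14) * u + (-10) * u * x + (4) * u * x ^ 2 + (13) * u * u⁻¹ + (-1) * u * u⁻¹ * x ^ 2 + (2) * u * u⁻¹ ^ 2 + (5/2) * u * u⁻¹ ^ 2 * x + (-1) * u * u⁻¹ ^ 3 + (9) * u ^ 2 + (-5/2) * u ^ 2 * x + (2) * u ^ 2 * u⁻¹ +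 (5/2) * u ^ 2 * u⁻¹ * x + (-1) * u ^ 2 * u⁻¹ ^ 2 + (2) * u ^ 3 + (-1) * u ^ 3 * u⁻¹) * hq

lemma card_helper (p : Fin 4 → Prop) [DecidablePred p] :
    Nat.card {i : Fin 4 // p i} =
      (if p 0 then 1 else 0) + (if p 1 then 1 else 0) + (if p 2 then 1 else 0)
        + (if p 3 then 1 else 0) := by
  rw [Nat.card_eq_fintype_card, Fintype.card_subtype, Finset.card_filter, Fin.sum_univ_four]

lemma sig31 (lam : Fin 4 → ℝ)
    (h1 : 0 < lam 0 + lam 1 + lam 2 + lam 3)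
    (h3 : lam 0 * lam 1 * lam 2 + lam 0 * lam 1 * lam 3 + lam 0 * lam 2 * lam 3
      + lam 1 * lam 2 * lam 3 < 0)
    (h4 : lam 0 * lam 1 * lam 2 * lam 3 < 0) :
    Nat.card {i : Fin 4 // 0 < lam i} = 3 ∧ Nat.card {i : Fin 4 // lam i < 0} = 1 := by
  classical
  have hne0 : lam 0 ≠ 0 := by intro hi; rw [hi] at h4; simp at h4
  have hne1 : lam 1 ≠ 0 := by intro hi; rw [hi] at h4; simp at h4
  have hne2 : lam 2 ≠ 0 := by intro hi; rw [hi] at h4; simp at h4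
  have hne3 : lam 3 ≠ 0 := by intro hi; rw [hi] at h4; simp at h4
  rcases hne0.lt_or_gt with ha|ha <;> rcases hne1.lt_or_gt with hb|hb <;>
    rcases hne2.lt_or_gt with hc|hc <;> rcases hne3.lt_or_gt with hd|hd
  · exfalso
    nlinarith [mul_pos (mul_pos_of_neg_of_neg ha hb) (mul_pos_of_neg_of_neg hc hd)]
  · exfalso
    have hS2 : 0 < lam 0 * lam 1 + lam 0 * lam 2 + lam 1 * lam 2 := by
      have p1 := mul_pos_of_neg_of_neg ha hb
      have p2 := mul_pos_of_neg_of_neg ha hc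
      have p3 := mul_pos_of_neg_of_neg hb hc
      linarith
    nlinarith [mul_pos h1 hS2, mul_pos_of_neg_of_neg ha hb, mul_pos_of_neg_of_neg ha hc, mul_pos_of_neg_of_neg hb hc, mul_neg_of_neg_of_pos ha (mul_pos_of_neg_of_neg hb hc), mul_neg_of_pos_of_neg (mul_pos_of_neg_of_neg ha ha) hb, mul_neg_of_pos_of_neg (mul_pos_of_neg_of_neg ha ha) hc, mul_neg_of_pos_of_neg (mul_pos_of_neg_of_neg hb hb) ha, mul_neg_of_pos_of_neg (mul_pos_of_neg_of_neg hb hb) hc, mul_neg_of_pos_of_neg (mul_pos_of_neg_of_neg hc hc) ha, mul_neg_of_pos_of_neg (mul_pos_of_neg_of_neg hc hc) hb]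
  · exfalso
    have hS2 : 0 < lam 0 * lam 1 + lam 0 * lam 3 + lam 1 * lam 3 := by
      have p1 := mul_pos_of_neg_of_neg ha hb
      have p2 := mul_pos_of_neg_of_neg ha hd
      have p3 := mul_pos_of_neg_of_neg hb hd
      linarith
    nlinarith [mul_pos h1 hS2, mul_pos_of_neg_of_neg ha hb, mul_pos_of_neg_of_neg ha hd, mul_pos_of_neg_of_neg hb hd, mul_neg_of_neg_of_pos ha (mul_pos_of_neg_of_neg hb hd), mul_neg_of_pos_of_neg (mul_pos_of_neg_of_neg ha ha) hb, mul_neg_of_pos_of_neg (mul_pos_of_neg_of_neg ha ha) hd, mul_neg_of_pos_of_neg (mul_pos_of_neg_of_neg hb hb) ha, mul_neg_of_pos_of_neg (mul_pos_of_neg_of_neg hb hb) hd, mul_neg_of_pos_of_neg (mul_pos_of_neg_of_neg hd hd) ha, mul_neg_of_pos_of_neg (mul_pos_of_neg_of_neg hd hd) hb]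
  · exfalso
    nlinarith [mul_pos (mul_pos_of_neg_of_neg ha hb) (mul_pos hc hd)]
  · exfalso
    have hS2 : 0 < lam 0 * lam 2 + lam 0 * lam 3 + lam 2 * lam 3 := by
      have p1 := mul_pos_of_neg_of_neg ha hc
      have p2 := mul_pos_of_neg_of_neg ha hd
      have p3 := mul_pos_of_neg_of_neg hc hd
      linarith
    nlinarith [mul_pos h1 hS2, mul_pos_of_neg_of_neg ha hc, mul_pos_of_neg_of_neg ha hd, mul_pos_of_neg_of_neg hc hd, mul_neg_of_neg_of_pos ha (mul_pos_of_neg_of_neg hc hd), mul_neg_of_pos_of_neg (mul_pos_of_neg_of_neg ha ha) hc, mul_neg_of_pos_of_neg (mul_pos_of_neg_of_neg ha ha) hd, mul_neg_of_pos_of_neg (mul_pos_of_neg_of_neg hc hc) ha, mul_neg_of_pos_of_neg (mul_pos_of_neg_of_neg hc hc) hd, mul_neg_of_pos_of_neg (mul_pos_of_neg_of_neg hd hd) ha, mul_neg_of_pos_of_neg (mul_pos_of_neg_of_neg hd hd) hc]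
  · exfalso
    nlinarith [mul_pos_of_neg_of_neg (mul_neg_of_neg_of_pos ha hb) (mul_neg_of_neg_of_pos hc hd)]
  · exfalso
    nlinarith [mul_pos_of_neg_of_neg (mul_neg_of_neg_of_pos ha hb) (mul_neg_of_pos_of_neg hc hd)]
  · constructor
    · rw [card_helper, if_neg (not_lt.mpr ha.le), if_pos hb, if_pos hc, if_pos hd]
    · rw [card_helper, if_pos ha, if_neg (not_lt.mpr hb.le), if_neg (not_lt.mpr hc.le), if_neg (not_lt.mpr hd.le)]
  · exfalso
    have hS2 : 0 < lam 1 * lam 2 + lam 1 * lam 3 + lam 2 * lam 3 := by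
      have p1 := mul_pos_of_neg_of_neg hb hc
      have p2 := mul_pos_of_neg_of_neg hb hd
      have p3 := mul_pos_of_neg_of_neg hc hd
      linarith
    nlinarith [mul_pos h1 hS2, mul_pos_of_neg_of_neg hb hc, mul_pos_of_neg_of_neg hb hd, mul_pos_of_neg_of_neg hc hd, mul_neg_of_neg_of_pos hb (mul_pos_of_neg_of_neg hc hd), mul_neg_of_pos_of_neg (mul_pos_of_neg_of_neg hb hb) hc, mul_neg_of_pos_of_neg (mul_pos_of_neg_of_neg hb hb) hd, mul_neg_of_pos_of_neg (mul_pos_of_neg_of_neg hc hc) hb, mul_neg_of_pos_of_neg (mul_pos_of_neg_of_neg hc hc) hd, mul_neg_of_pos_of_neg (mul_pos_of_neg_of_neg hd hd) hb, mul_neg_of_pos_of_neg (mul_pos_of_neg_of_neg hd hd) hc]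
  · exfalso
    nlinarith [mul_pos_of_neg_of_neg (mul_neg_of_pos_of_neg ha hb) (mul_neg_of_neg_of_pos hc hd)]
  · exfalso
    nlinarith [mul_pos_of_neg_of_neg (mul_neg_of_pos_of_neg ha hb) (mul_neg_of_pos_of_neg hc hd)]
  · constructor
    · rw [card_helper, if_pos ha, if_neg (not_lt.mpr hb.le), if_pos hc, if_pos hd]
    · rw [card_helper, if_neg (not_lt.mpr ha.le), if_pos hb, if_neg (not_lt.mpr hc.le), if_neg (not_lt.mpr hd.le)]
  · exfalso
    nlinarith [mul_pos (mul_pos ha hb) (mul_pos_of_neg_of_neg hc hd)]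
  · constructor
    · rw [card_helper, if_pos ha, if_pos hb, if_neg (not_lt.mpr hc.le), if_pos hd]
    · rw [card_helper, if_neg (not_lt.mpr ha.le), if_neg (not_lt.mpr hb.le), if_pos hc, if_neg (not_lt.mpr hd.le)]
  · constructor
    · rw [card_helper, if_pos ha, if_pos hb, if_pos hc, if_neg (not_lt.mpr hd.le)]
    · rw [card_helper, if_neg (not_lt.mpr ha.le), if_neg (not_lt.mpr hb.le), if_neg (not_lt.mpr hc.le), if_pos hd]
  · exfalso
    nlinarith [mul_pos (mul_pos ha hb) (mul_pos hc hd)]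

lemma sig22 (lam : Fin 4 → ℝ)
    (h1 : 0 < lam 0 + lam 1 + lam 2 + lam 3)
    (h2 : lam 0 * lam 1 + lam 0 * lam 2 + lam 0 * lam 3 + lam 1 * lam 2 + lam 1 * lam 3
      + lam 2 * lam 3 < 0)
    (h4 : 0 < lam 0 * lam 1 * lam 2 * lam 3) :
    Nat.card {i : Fin 4 // 0 < lam i} = 2 ∧ Nat.card {i : Fin 4 // lam i < 0} = 2 := by
  classical
  have hne0 : lam 0 ≠ 0 := by intro hi; rw [hi] at h4; simp at h4
  have hne1 : lam 1 ≠ 0 := by intro hi; rw [hi] at h4; simp at h4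
  have hne2 : lam 2 ≠ 0 := by intro hi; rw [hi] at h4; simp at h4
  have hne3 : lam 3 ≠ 0 := by intro hi; rw [hi] at h4; simp at h4
  rcases hne0.lt_or_gt with ha|ha <;> rcases hne1.lt_or_gt with hb|hb <;>
    rcases hne2.lt_or_gt with hc|hc <;> rcases hne3.lt_or_gt with hd|hd
  · exfalso
    linarith
  · exfalso
    nlinarith [mul_neg_of_pos_of_neg (mul_pos_of_neg_of_neg ha hb) (mul_neg_of_neg_of_pos hc hd)]
  · exfalso
    nlinarith [mul_neg_of_pos_of_neg (mul_pos_of_neg_of_neg ha hb) (mul_neg_of_pos_of_neg hc hd)]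
  · constructor
    · rw [card_helper, if_neg (not_lt.mpr ha.le), if_neg (not_lt.mpr hb.le), if_pos hc, if_pos hd]
    · rw [card_helper, if_pos ha, if_pos hb, if_neg (not_lt.mpr hc.le), if_neg (not_lt.mpr hd.le)]
  · exfalso
    nlinarith [mul_neg_of_neg_of_pos (mul_neg_of_neg_of_pos ha hb) (mul_pos_of_neg_of_neg hc hd)]
  · constructor
    · rw [card_helper, if_neg (not_lt.mpr ha.le), if_pos hb, if_neg (not_lt.mpr hc.le), if_pos hd]
    · rw [card_helper, if_pos ha, if_neg (not_lt.mpr hb.le), if_pos hc, if_neg (not_lt.mpr hd.le)]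
  · constructor
    · rw [card_helper, if_neg (not_lt.mpr ha.le), if_pos hb, if_pos hc, if_neg (not_lt.mpr hd.le)]
    · rw [card_helper, if_pos ha, if_neg (not_lt.mpr hb.le), if_neg (not_lt.mpr hc.le), if_pos hd]
  · exfalso
    nlinarith [mul_neg_of_neg_of_pos (mul_neg_of_neg_of_pos ha hb) (mul_pos hc hd)]
  · exfalso
    nlinarith [mul_neg_of_neg_of_pos (mul_neg_of_pos_of_neg ha hb) (mul_pos_of_neg_of_neg hc hd)]
  · constructor
    · rw [card_helper, if_pos ha, if_neg (not_lt.mpr hb.le), if_neg (not_lt.mpr hc.le), if_pos hd]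
    · rw [card_helper, if_neg (not_lt.mpr ha.le), if_pos hb, if_pos hc, if_neg (not_lt.mpr hd.le)]
  · constructor
    · rw [card_helper, if_pos ha, if_neg (not_lt.mpr hb.le), if_pos hc, if_neg (not_lt.mpr hd.le)]
    · rw [card_helper, if_neg (not_lt.mpr ha.le), if_pos hb, if_neg (not_lt.mpr hc.le), if_pos hd]
  · exfalso
    nlinarith [mul_neg_of_neg_of_pos (mul_neg_of_pos_of_neg ha hb) (mul_pos hc hd)]
  · constructor
    · rw [card_helper, if_pos ha, if_pos hb, if_neg (not_lt.mpr hc.le), if_neg (not_lt.mpr hd.le)]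
    · rw [card_helper, if_neg (not_lt.mpr ha.le), if_neg (not_lt.mpr hb.le), if_pos hc, if_pos hd]
  · exfalso
    nlinarith [mul_neg_of_pos_of_neg (mul_pos ha hb) (mul_neg_of_neg_of_pos hc hd)]
  · exfalso
    nlinarith [mul_neg_of_pos_of_neg (mul_pos ha hb) (mul_neg_of_pos_of_neg hc hd)]
  · exfalso
    nlinarith [mul_pos ha hb, mul_pos ha hc, mul_pos ha hd, mul_pos hb hc, mul_pos hb hd, mul_pos hc hd]

set_option maxHeartbeats 1000000 in
/-- For `u = e^{iα}` with `|α| < 2π/3` the Hermitian matrix `J_u`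
has signature `(3,1)` (three positive and one negative eigenvalue),
and for `2π/3 < |α| < π` it has signature `(2,2)`. -/
theorem stmt5 (α : ℝ) (h : (Jmat (Complex.exp (α * Complex.I))).IsHermitian) :
    (|α| < 2 * π / 3 →
      Nat.card {i : Fin 4 // 0 < h.eigenvalues i} = 3 ∧
      Nat.card {i : Fin 4 // h.eigenvalues i < 0} = 1) ∧
    (2 * π / 3 < |α| ∧ |α| < π →
      Nat.card {i : Fin 4 // 0 < h.eigenvalues i} = 2 ∧
      Nat.card {i : Fin 4 // h.eigenvalues i < 0} = 2) := by
  set u : ℂ := Complex.exp (α * Complex.I) with hudef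
  have hu : u ≠ 0 := Complex.exp_ne_zero _
  have hc : (starRingEnd ℂ) u = u⁻¹ := by
    rw [hudef, ← Complex.exp_conj, ← Complex.exp_neg]
    congr 1
    simp [Complex.conj_I, Complex.conj_ofReal]
  set t : ℝ := 2 * Real.cos α with htdef
  have hts : ((t : ℝ) : ℂ) = u + u⁻¹ := by
    rw [htdef, hudef, ← Complex.exp_neg]
    push_cast [← Complex.ofReal_cos]
    rw [show -((α:ℂ) * Complex.I) = (-α : ℂ) * Complex.I by ring]
    rw [Complex.exp_mul_I, Complex.exp_mul_I]
    push_cast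
    rw [Complex.cos_neg, Complex.sin_neg, ← Complex.ofReal_cos]
    ring
  set lam : Fin 4 → ℝ := h.eigenvalues with hlam
  have key : ∀ x : ℂ, (x - (lam 0 : ℂ)) * (x - (lam 1 : ℂ)) * (x - (lam 2 : ℂ))
      * (x - (lam 3 : ℂ)) =
      x^4 - (5*((t:ℂ))+10)*x^3 + (-2*((t:ℂ))^3-3*((t:ℂ))^2+5*((t:ℂ))+6)*x^2
      + (5/2)*(((t:ℂ))+1)^2*(((t:ℂ))+2)^2*x - (((t:ℂ))+1)^3*(((t:ℂ))+2)^2 := by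
    intro x
    have h1 := det_smul_one_sub h x
    rw [Fin.prod_univ_four] at h1
    have h2 := charJ u x hu hc
    rw [h1] at h2
    rw [hts]
    linear_combination h2
  have HR : ∀ x : ℝ, (x - lam 0) * (x - lam 1) * (x - lam 2) * (x - lam 3) =
      x^4 - (5*t+10)*x^3 + (-2*t^3-3*t^2+5*t+6)*x^2
      + (5/2)*(t+1)^2*(t+2)^2*x - (t+1)^3*(t+2)^2 := by
    intro x
    apply Complex.ofReal_inj.mp
    push_cast
    linear_combination key (x : ℂ)
  have H0 := HR 0
  have H1 := HR 1
  have Hm1 := HR (-1)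
  have H2 := HR 2
  have hs1 : lam 0 + lam 1 + lam 2 + lam 3 = 5*t+10 := by
    linear_combination (-1/2 : ℝ) * H0 + (1/2 : ℝ) * H1 + (1/6 : ℝ) * Hm1 + (-1/6 : ℝ) * H2
  have hs2 : lam 0 * lam 1 + lam 0 * lam 2 + lam 0 * lam 3 + lam 1 * lam 2 + lam 1 * lam 3
      + lam 2 * lam 3 = -2*t^3-3*t^2+5*t+6 := by
    linear_combination (-1 : ℝ) * H0 + (1/2 : ℝ) * H1 + (1/2 : ℝ) * Hm1
  have hs3 : lam 0 * lam 1 * lam 2 + lam 0 * lam 1 * lam 3 + lam 0 * lam 2 * lam 3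
      + lam 1 * lam 2 * lam 3 = -(5/2)*(t+1)^2*(t+2)^2 := by
    linear_combination (1/2 : ℝ) * H0 + (-1 : ℝ) * H1 + (1/3 : ℝ) * Hm1 + (1/6 : ℝ) * H2
  have hs4 : lam 0 * lam 1 * lam 2 * lam 3 = -(t+1)^3*(t+2)^2 := by
    linear_combination H0
  constructor
  · intro hα
    -- case |α| < 2π/3 : t > -1
    have hπ := Real.pi_pos
    have hcos : Real.cos (2 * π / 3) < Real.cos |α| := by
      apply Real.cos_lt_cos_of_nonneg_of_le_pi (abs_nonneg α) (by linarith) hα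
    have hc23 : Real.cos (2 * π / 3) = -(1/2) := by
      rw [show 2 * π / 3 = π - π/3 by ring, Real.cos_pi_sub, Real.cos_pi_div_three]
    rw [hc23, Real.cos_abs] at hcos
    have ht1 : (0:ℝ) < t + 1 := by rw [htdef]; linarith
    have ht2 : (0:ℝ) < t + 2 := by linarith
    apply sig31 lam
    · rw [hs1]; linarith
    · rw [hs3]
      nlinarith [mul_pos (mul_pos ht1 ht1) (mul_pos ht2 ht2)]
    · rw [hs4]
      nlinarith [mul_pos (mul_pos (mul_pos ht1 ht1) ht1) (mul_pos ht2 ht2)]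
  · rintro ⟨hα1, hα2⟩
    have hπ := Real.pi_pos
    have hcosu : Real.cos |α| < Real.cos (2 * π / 3) := by
      apply Real.cos_lt_cos_of_nonneg_of_le_pi (by positivity) (le_of_lt hα2) hα1
    have hcosl : Real.cos π < Real.cos |α| := by
      apply Real.cos_lt_cos_of_nonneg_of_le_pi (abs_nonneg α) (le_refl π) hα2
    have hc23 : Real.cos (2 * π / 3) = -(1/2) := by
      rw [show 2 * π / 3 = π - π/3 by ring, Real.cos_pi_sub, Real.cos_pi_div_three]
    rw [hc23, Real.cos_abs] at hcosu
    rw [Real.cos_pi, Real.cos_abs] at hcosl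
    have ht1 : t + 1 < 0 := by rw [htdef]; linarith
    have ht2 : (0:ℝ) < t + 2 := by rw [htdef]; linarith
    have ht3 : (0:ℝ) < 3 - 2*t := by rw [htdef]; linarith
    apply sig22 lam
    · rw [hs1]; linarith
    · rw [hs2]
      nlinarith [mul_neg_of_neg_of_pos (mul_neg_of_neg_of_pos ht1 ht2) ht3]
    · rw [hs4]
      nlinarith [mul_neg_of_neg_of_pos (mul_neg_of_pos_of_neg (mul_pos_of_neg_of_neg ht1 ht1) ht1) (mul_pos ht2 ht2)]
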